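/- Let V ∈ R^{N×r} be a random matrix with i.i.d. entries equal to 1/λ with probability λ ∈ (0,1) and 0 otherwise. For fixed Y ∈ R^{N×C}, X ∈ R^{N×D}, W ∈ R^{D×C}, A ∈ R^{D×r}, B ∈ R^{r×C}, E[‖Y − XW − ((XA)⊙V)B‖_F²] = ‖Y − XW‖_F² − 2 tr((Y − XW)ᵀXAB) + ‖XAB‖_F² + ((1−λ)/λ) · Σ_{i=1}^{r} ‖X A_{:,i} B_{i,:}‖_F². -/

import Mathlib

/-!
Write `R = Y - XW`. Entry `(n, c)` of the residual is `R n c - ∑ᵢ aᵢ Vₙᵢ` with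
`aᵢ = (XA)ₙᵢ Bᵢc`. The entries of a row of `V` are independent with mean `1` and variance
`(1 - λ)/λ`, so its second moment is `(R n c - (XAB) n c)² + (1 - λ)/λ ∑ᵢ aᵢ²`. Summing over all
entries gives `‖R - XAB‖² + (1 - λ)/λ ∑ᵢ ‖X A_{:,i} B_{i,:}‖²`; expanding the first square
gives the trace form.
-/

open MeasureTheory ProbabilityTheory Matrix

/-- Squared Frobenius norm of a real matrix. -/
noncomputable def frobSq {m n : Type*} [Fintype m] [Fintype n] (M : Matrix m n ℝ) : ℝ :=
  ∑ i, ∑ j, (M i j) ^ 2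

noncomputable def dropoutMeasure (l : ℝ) : Measure ℝ :=
  ENNReal.ofReal l • Measure.dirac (1 / l) + ENNReal.ofReal (1 - l) • Measure.dirac 0

section Dropout

variable {l : ℝ}

lemma integrable_dropoutMeasure (g : ℝ → ℝ) : Integrable g (dropoutMeasure l) :=
  ((integrable_dirac enorm_lt_top).smul_measure ENNReal.ofReal_ne_top).add_measure
    ((integrable_dirac enorm_lt_top).smul_measure ENNReal.ofReal_ne_top)

lemma integral_dropoutMeasure (hl0 : 0 ≤ l) (hl1 : l ≤ 1) (g : ℝ → ℝ) :
    ∫ x, g x ∂dropoutMeasure l = l * g (1 / l) + (1 - l) * g 0 := by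
  rw [dropoutMeasure, integral_add_measure
      ((integrable_dirac enorm_lt_top).smul_measure ENNReal.ofReal_ne_top)
      ((integrable_dirac enorm_lt_top).smul_measure ENNReal.ofReal_ne_top),
    integral_smul_measure, integral_smul_measure, integral_dirac, integral_dirac,
    ENNReal.toReal_ofReal hl0, ENNReal.toReal_ofReal (sub_nonneg.2 hl1), smul_eq_mul, smul_eq_mul]

variable {Ω : Type*} [MeasurableSpace Ω] {μ : Measure Ω} {ξ : Ω → ℝ}

lemma integral_comp_of_map_eq_dropoutMeasure (hξ : Measurable ξ)
    (hmap : μ.map ξ = dropoutMeasure l) (hl0 : 0 ≤ l) (hl1 : l ≤ 1) (g : ℝ → ℝ) :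
    ∫ ω, g (ξ ω) ∂μ = l * g (1 / l) + (1 - l) * g 0 := by
  rw [← integral_map hξ.aemeasurable (hmap ▸ (integrable_dropoutMeasure g).1), hmap,
    integral_dropoutMeasure hl0 hl1]

lemma memLp_two_of_map_eq_dropoutMeasure (hξ : Measurable ξ)
    (hmap : μ.map ξ = dropoutMeasure l) : MemLp ξ 2 μ := by
  have hid : MemLp id 2 (μ.map ξ) := hmap ▸
    (memLp_two_iff_integrable_sq aestronglyMeasurable_id).2 (integrable_dropoutMeasure _)
  exact (memLp_map_measure_iff aestronglyMeasurable_id hξ.aemeasurable).1 hid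

lemma integral_of_map_eq_dropoutMeasure (hξ : Measurable ξ)
    (hmap : μ.map ξ = dropoutMeasure l) (hl0 : 0 < l) (hl1 : l ≤ 1) : μ[ξ] = 1 := by
  change ∫ ω, id (ξ ω) ∂μ = 1
  rw [integral_comp_of_map_eq_dropoutMeasure hξ hmap hl0.le hl1 id, id, id]
  field_simp
  ring

lemma variance_of_map_eq_dropoutMeasure [IsProbabilityMeasure μ] (hξ : Measurable ξ)
    (hmap : μ.map ξ = dropoutMeasure l) (hl0 : 0 < l) (hl1 : l ≤ 1) :
    Var[ξ; μ] = (1 - l) / l := by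
  have hsq := integral_comp_of_map_eq_dropoutMeasure hξ hmap hl0.le hl1 (· ^ 2)
  rw [variance_eq_sub (memLp_two_of_map_eq_dropoutMeasure hξ hmap),
    integral_of_map_eq_dropoutMeasure hξ hmap hl0 hl1]
  simp only [Pi.pow_apply]
  rw [hsq]
  field_simp
  ring

end Dropout

section SecondMoment

variable {Ω ι : Type*} [MeasurableSpace Ω] {μ : Measure Ω} [IsProbabilityMeasure μ] [Fintype ι]
  {ξ : ι → Ω → ℝ}

lemma memLp_const_sub_sum_mul (hL2 : ∀ i, MemLp (ξ i) 2 μ) (R : ℝ) (a : ι → ℝ) :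
    MemLp (fun ω => R - ∑ i, a i * ξ i ω) 2 μ :=
  (memLp_const R).sub (memLp_finsetSum _ fun i _ => (hL2 i).const_mul (a i))

lemma integral_sq_const_sub_sum_mul (hL2 : ∀ i, MemLp (ξ i) 2 μ)
    (hind : Pairwise fun i j => IndepFun (ξ i) (ξ j) μ) (R : ℝ) (a : ι → ℝ) :
    ∫ ω, (R - ∑ i, a i * ξ i ω) ^ 2 ∂μ
      = (R - ∑ i, a i * μ[ξ i]) ^ 2 + ∑ i, a i ^ 2 * Var[ξ i; μ] := by
  have hterm : ∀ i, MemLp (fun ω => a i * ξ i ω) 2 μ := fun i => (hL2 i).const_mul (a i)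
  have hsum : MemLp (fun ω => ∑ i, a i * ξ i ω) 2 μ := memLp_finsetSum _ fun i _ => hterm i
  have hmean : ∫ ω, (R - ∑ i, a i * ξ i ω) ∂μ = R - ∑ i, a i * μ[ξ i] := by
    rw [integral_sub (integrable_const R) (hsum.integrable one_le_two), integral_const,
      integral_finsetSum _ fun i _ => (hterm i).integrable one_le_two]
    simp [integral_const_mul]
  have hvar : Var[fun ω => R - ∑ i, a i * ξ i ω; μ] = ∑ i, a i ^ 2 * Var[ξ i; μ] := by
    rw [variance_const_sub hsum.1, ← Finset.sum_fn, IndepFun.variance_sum (fun i _ => hterm i)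
        fun i _ j _ hij => (hind hij).comp (measurable_const_mul _) (measurable_const_mul _)]
    exact Finset.sum_congr rfl fun i _ => variance_const_mul _ _ _
  have hY := variance_eq_sub (memLp_const_sub_sum_mul hL2 R a)
  simp only [Pi.pow_apply] at hY
  rw [hmean, hvar] at hY
  linarith

end SecondMoment

section Matrix

variable {m n k : Type*}

lemma frobSq_sub [Fintype m] [Fintype n] (R M : Matrix m n ℝ) :
    frobSq (R - M) = frobSq R - 2 * trace (Rᵀ * M) + frobSq M := by
  have htrace : trace (Rᵀ * M) = ∑ a, ∑ c, R a c * M a c := by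
    simp only [trace, diag, mul_apply, transpose_apply]
    exact Finset.sum_comm
  simp only [frobSq, htrace, Matrix.sub_apply, Finset.mul_sum, ← Finset.sum_sub_distrib,
    ← Finset.sum_add_distrib]
  exact Finset.sum_congr rfl fun a _ => Finset.sum_congr rfl fun c _ => by ring

lemma hadamard_mul_apply {S : Type*} [CommSemiring S] [Fintype k] (P V : Matrix m k S)
    (B : Matrix k n S) (a : m) (c : n) :
    (hadamard P V * B) a c = ∑ i, P a i * B i c * V a i := by
  simp only [mul_apply, hadamard_apply]
  exact Finset.sum_congr rfl fun i _ => by ring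

lemma mul_of_col_mul_row {d S : Type*} [CommSemiring S] [Fintype d] (X : Matrix m d S)
    (A : Matrix d k S) (B : Matrix k n S) (i : k) :
    X * of (fun d c => A d i * B i c) = of fun a c => (X * A) a i * B i c := by
  ext a c
  simp only [mul_apply, of_apply, Finset.sum_mul, mul_assoc]

end Matrix

section RandomMatrix

variable {Ω m n k : Type*} [MeasurableSpace Ω] {μ : Measure Ω} [IsProbabilityMeasure μ]
  [Fintype m] [Fintype n] [Fintype k]

theorem integral_frobSq_sub_hadamard_mul {V : Ω → Matrix m k ℝ} {v : ℝ}
    (hL2 : ∀ a i, MemLp (fun ω => V ω a i) 2 μ)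
    (hind : ∀ a, Pairwise fun i j => IndepFun (fun ω => V ω a i) (fun ω => V ω a j) μ)
    (hmean : ∀ a i, ∫ ω, V ω a i ∂μ = 1) (hvar : ∀ a i, Var[fun ω => V ω a i; μ] = v)
    (R : Matrix m n ℝ) (P : Matrix m k ℝ) (B : Matrix k n ℝ) :
    ∫ ω, frobSq (R - hadamard P (V ω) * B) ∂μ
      = frobSq (R - P * B) + v * ∑ i, frobSq (of fun a c => P a i * B i c) := by
  have hrow : ∀ ω a c, (R - hadamard P (V ω) * B) a c = R a c - ∑ i, P a i * B i c * V ω a i :=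
    fun ω a c => by rw [Matrix.sub_apply, hadamard_mul_apply]
  have hint : ∀ a c, Integrable (fun ω => (R a c - ∑ i, P a i * B i c * V ω a i) ^ 2) μ :=
    fun a c => (memLp_const_sub_sum_mul (hL2 a) _ _).integrable_sq
  have hentry : ∀ a c, ∫ ω, (R a c - ∑ i, P a i * B i c * V ω a i) ^ 2 ∂μ
      = (R - P * B) a c ^ 2 + v * ∑ i, (P a i * B i c) ^ 2 := by
    intro a c
    rw [integral_sq_const_sub_sum_mul (hL2 a) (hind a)]
    simp only [hmean, hvar, mul_one, Matrix.sub_apply, mul_apply, Finset.sum_mul, mul_comm v]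
  simp only [frobSq, hrow]
  rw [integral_finsetSum _ fun a _ => integrable_finsetSum _ fun c _ => hint a c]
  simp only [integral_finsetSum _ fun c _ => hint _ c, hentry, Finset.sum_add_distrib,
    Finset.mul_sum, of_apply]
  congr 1
  conv_rhs => rw [Finset.sum_comm]
  exact Finset.sum_congr rfl fun a _ => Finset.sum_comm

end RandomMatrix

/-- Expected LoRA loss with dropout at the rank-`r` bottleneck:
`E[‖Y − XW − ((XA)⊙V)B‖²] = ‖Y−XW‖² − 2tr((Y−XW)ᵀXAB) + ‖XAB‖²
  + ((1−λ)/λ)·Σᵢ ‖X A_{:,i} B_{i,:}‖²`. -/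
theorem stmt3 {Ω : Type*} [MeasureSpace Ω] [IsProbabilityMeasure (ℙ : Measure Ω)]
    {N C D r : ℕ} (l : ℝ) (hl : 0 < l) (hl1 : l < 1)
    (Y : Matrix (Fin N) (Fin C) ℝ) (X : Matrix (Fin N) (Fin D) ℝ)
    (W : Matrix (Fin D) (Fin C) ℝ)
    (A : Matrix (Fin D) (Fin r) ℝ) (B : Matrix (Fin r) (Fin C) ℝ)
    (V : Ω → Matrix (Fin N) (Fin r) ℝ)
    (hmeas : ∀ i j, Measurable fun ω => V ω i j)
    (hdist : ∀ i j, Measure.map (fun ω => V ω i j) ℙ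
      = ENNReal.ofReal l • Measure.dirac (1 / l) + ENNReal.ofReal (1 - l) • Measure.dirac 0)
    (hindep : iIndepFun
      (fun (ij : Fin N × Fin r) ω => V ω ij.1 ij.2) ℙ) :
    ∫ ω, frobSq (Y - X * W - Matrix.hadamard (X * A) (V ω) * B) =
      frobSq (Y - X * W) - 2 * Matrix.trace ((Y - X * W)ᵀ * (X * A * B))
        + frobSq (X * A * B)
        + ((1 - l) / l) *
            ∑ i : Fin r, frobSq (X * Matrix.of fun d c => A d i * B i c) := by
  have hrow : ∀ n, Pairwise fun i j => IndepFun (fun ω => V ω n i) (fun ω => V ω n j) ℙ :=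
    fun n i j hij => hindep.indepFun (i := (n, i)) (j := (n, j)) (by simpa using hij)
  rw [integral_frobSq_sub_hadamard_mul
      (fun n i => memLp_two_of_map_eq_dropoutMeasure (hmeas n i) (hdist n i)) hrow
      (fun n i => integral_of_map_eq_dropoutMeasure (hmeas n i) (hdist n i) hl hl1.le)
      (fun n i => variance_of_map_eq_dropoutMeasure (hmeas n i) (hdist n i) hl hl1.le),
    frobSq_sub]
  simp only [mul_of_col_mul_row]
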